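/- arXiv:1006.5652 — 2 statements merged into one kernel-verified Lean document; each statement's English description precedes it below -/
import Mathlib

section
/- Let q > 0, q ≠ 1, and let R_q = 2/(1-q) if 0 < q < 1 and R_q = 2q/(q-1) if q > 1. Then for every complex number z with |z| < R_q, the three series below converge and e_q(z/2) · E_q(z/2) = ∑_{n=0}^∞ z^n/{n}_q!, where e_q(w) = ∑_{n=0}^∞ w^n/[n]_q!, E_q(w) = ∑_{n=0}^∞ q^{n(n-1)/2} w^n/[n]_q!, and {n}_q! is the factorial of the symbols {n}_q = 2(1-q^n)/((1-q)(1+q^{n-1})). -/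
/-- The q-integer `[k]_q = 1 + q + q^2 + ⋯ + q^(k-1)`. -/
noncomputable def qInt (q : ℝ) (k : ℕ) : ℝ := ∑ i ∈ Finset.range k, q ^ i

/-- The q-factorial `[n]_q! = [1]_q [2]_q ⋯ [n]_q`, with `[0]_q! = 1`. -/
noncomputable def qFact (q : ℝ) (n : ℕ) : ℝ := ∏ k ∈ Finset.range n, qInt q (k + 1)

/-- The symbol `{n}_q = 2(1-q^n)/((1-q)(1+q^(n-1)))` (for `n ≥ 1`). -/
noncomputable def qBrace (q : ℝ) (n : ℕ) : ℝ :=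
  2 * (1 - q ^ n) / ((1 - q) * (1 + q ^ (n - 1)))

/-- The factorial `{n}_q! = {1}_q {2}_q ⋯ {n}_q`, with `{0}_q! = 1`. -/
noncomputable def qBraceFact (q : ℝ) (n : ℕ) : ℝ := ∏ k ∈ Finset.range n, qBrace q (k + 1)

/-- The radius `R_q = 2/(1-q)` for `0 < q < 1` and `R_q = 2q/(q-1)` for `q > 1`. -/
noncomputable def Rq (q : ℝ) : ℝ := if q < 1 then 2 / (1 - q) else 2 * q / (q - 1)

/-!
The Cauchy product of `e_q(w)` and `E_q(w)` has `n`-th coefficient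
`∑_{i+j=n} q^(j choose 2) / ([i]_q! [j]_q!)`, which by Rothe's q-binomial theorem at `x = 1` is
`∏_{j<n} (1 + q^j) / [n]_q!`. Since `{n+1}_q (1 + q^n) = 2 [n+1]_q`, this equals `2^n / {n}_q!`,
so at `w = z/2` the product is `∑ z^n / {n}_q!`.

For convergence, `{n}_q → R_q` (for `q > 1` use that `{n}_q` is invariant under `q ↦ 1/q`), so the
ratio test gives absolute convergence of `∑ z^n / {n}_q!` for `|z| < R_q`. Both factor series are
dominated by it termwise, because `1 ≤ ∏_{j<n} (1 + q^j)` and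
`q^(n choose 2) = ∏_{j<n} q^j ≤ ∏_{j<n} (1 + q^j)`.
-/

open Finset Filter Topology

section Algebra

variable {q : ℝ}

lemma qInt_zero (q : ℝ) : qInt q 0 = 0 :=
  sum_range_zero _

lemma qInt_add (q : ℝ) (a b : ℕ) : qInt q (a + b) = qInt q a + q ^ a * qInt q b := by
  simp only [qInt, sum_range_add, mul_sum, pow_add]

lemma qInt_succ_pos (hq : 0 < q) (k : ℕ) : 0 < qInt q (k + 1) :=
  sum_pos (fun i _ => pow_pos hq i) nonempty_range_add_one

lemma qFact_pos (hq : 0 < q) (n : ℕ) : 0 < qFact q n :=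
  prod_pos fun k _ => qInt_succ_pos hq k

lemma qFact_succ (q : ℝ) (n : ℕ) : qFact q (n + 1) = qFact q n * qInt q (n + 1) :=
  prod_range_succ _ _

lemma qBrace_succ_mul (hq : 0 ≤ q) (hq1 : q ≠ 1) (n : ℕ) :
    qBrace q (n + 1) * (1 + q ^ n) = 2 * qInt q (n + 1) := by
  have h1q : 1 - q ≠ 0 := sub_ne_zero.mpr hq1.symm
  rw [qBrace, qInt, geom_sum_eq hq1, Nat.add_sub_cancel]
  field_simp
  ring

lemma qBrace_inv (q : ℝ) (n : ℕ) : qBrace q⁻¹ n = qBrace q n := by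
  rcases eq_or_ne q 0 with rfl | hq
  · simp
  cases n with
  | zero => simp [qBrace]
  | succ n =>
    have hqn : -q⁻¹ ^ (n + 1) ≠ 0 := by simpa using hq
    rw [qBrace, qBrace, Nat.add_sub_cancel, eq_comm, ← mul_div_mul_right _ _ hqn]
    congr 1 <;> simp only [inv_pow] <;> field_simp <;> ring

lemma qBraceFact_mul_prod (hq : 0 ≤ q) (hq1 : q ≠ 1) (n : ℕ) :
    qBraceFact q n * ∏ j ∈ range n, (1 + q ^ j) = 2 ^ n * qFact q n := by
  induction n with
  | zero => simp [qBraceFact, qFact]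
  | succ n ih =>
    calc qBraceFact q (n + 1) * ∏ j ∈ range (n + 1), (1 + q ^ j)
        = (qBraceFact q n * ∏ j ∈ range n, (1 + q ^ j)) * (qBrace q (n + 1) * (1 + q ^ n)) := by
          simp only [qBraceFact, prod_range_succ]; ring
      _ = 2 ^ (n + 1) * qFact q (n + 1) := by
          rw [ih, qBrace_succ_mul hq hq1, qFact_succ]; ring

lemma one_le_prod_one_add_pow (hq : 0 ≤ q) (n : ℕ) : 1 ≤ ∏ j ∈ range n, (1 + q ^ j) :=
  one_le_prod fun j _ => le_add_of_nonneg_right (pow_nonneg hq j)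

lemma pow_choose_two_le_prod_one_add_pow (hq : 0 ≤ q) (n : ℕ) :
    q ^ n.choose 2 ≤ ∏ j ∈ range n, (1 + q ^ j) := by
  rw [Nat.choose_two_right, ← sum_range_id, ← prod_pow_eq_pow_sum]
  exact prod_le_prod (fun j _ => pow_nonneg hq j) fun j _ => le_add_of_nonneg_left zero_le_one

end Algebra

section Rothe

variable {q : ℝ}

/-- `∑_j q^(j choose 2) [n choose j]_q x^j / [n]_q!`, written over the antidiagonal `i + j = n`. -/
noncomputable def qBinomialSum (q x : ℝ) (n : ℕ) : ℝ :=
  ∑ p ∈ antidiagonal n, q ^ p.2.choose 2 * x ^ p.2 / (qFact q p.1 * qFact q p.2)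

lemma qInt_succ_mul_qBinomialSum_succ (hq : 0 < q) (x : ℝ) (n : ℕ) :
    qInt q (n + 1) * qBinomialSum q x (n + 1) = (1 + x) * qBinomialSum q (q * x) n := by
  -- `[n+1]_q = [j]_q + q^j [i]_q` on `i + j = n + 1` splits the sum into two shifted copies
  have hsplit : qInt q (n + 1) * qBinomialSum q x (n + 1) =
      ∑ p ∈ antidiagonal (n + 1), qInt q p.2 * (q ^ p.2.choose 2 * x ^ p.2 /
          (qFact q p.1 * qFact q p.2)) +
      ∑ p ∈ antidiagonal (n + 1), q ^ p.2 * qInt q p.1 * (q ^ p.2.choose 2 * x ^ p.2 /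
          (qFact q p.1 * qFact q p.2)) := by
    rw [qBinomialSum, mul_sum, ← sum_add_distrib]
    refine sum_congr rfl fun p hp => ?_
    rw [← add_mul, ← qInt_add, add_comm p.2, mem_antidiagonal.mp hp]
  have hright : ∑ p ∈ antidiagonal (n + 1), qInt q p.2 * (q ^ p.2.choose 2 * x ^ p.2 /
      (qFact q p.1 * qFact q p.2)) = x * qBinomialSum q (q * x) n := by
    rw [Nat.sum_antidiagonal_succ', qBinomialSum, mul_sum]
    simp only [qInt_zero, zero_mul, zero_add]
    refine sum_congr rfl fun p _ => ?_
    have hF₁ := (qFact_pos hq p.1).ne'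
    have hF₂ := (qFact_pos hq p.2).ne'
    have hI := (qInt_succ_pos hq p.2).ne'
    rw [qFact_succ, Nat.choose_succ_succ, Nat.choose_one_right]
    field_simp
    ring
  have hleft : ∑ p ∈ antidiagonal (n + 1), q ^ p.2 * qInt q p.1 * (q ^ p.2.choose 2 * x ^ p.2 /
      (qFact q p.1 * qFact q p.2)) = qBinomialSum q (q * x) n := by
    rw [Nat.sum_antidiagonal_succ, qBinomialSum]
    simp only [qInt_zero, mul_zero, zero_mul, zero_add]
    refine sum_congr rfl fun p _ => ?_
    have hF₁ := (qFact_pos hq p.1).ne'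
    have hF₂ := (qFact_pos hq p.2).ne'
    have hI := (qInt_succ_pos hq p.1).ne'
    rw [qFact_succ]
    field_simp
    ring
  rw [hsplit, hright, hleft]
  ring

lemma qBinomialSum_eq (hq : 0 < q) (n : ℕ) (x : ℝ) :
    qBinomialSum q x n = (∏ j ∈ range n, (1 + q ^ j * x)) / qFact q n := by
  induction n generalizing x with
  | zero => simp [qBinomialSum, qFact]
  | succ n ih =>
    have hI := (qInt_succ_pos hq n).ne'
    rw [← mul_right_inj' hI, qInt_succ_mul_qBinomialSum_succ hq, ih, prod_range_succ', qFact_succ]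
    field_simp
    simp only [pow_succ, mul_assoc]

end Rothe

section Convergence

lemma summable_norm_pow_div_prod {𝕜 : Type*} [NormedField 𝕜] {a : ℕ → 𝕜} {R z : 𝕜}
    (ha : Tendsto a atTop (𝓝 R)) (hz : ‖z‖ < ‖R‖) :
    Summable fun n => ‖z ^ n / ∏ k ∈ range n, a k‖ := by
  have hR : R ≠ 0 := norm_pos_iff.mp ((norm_nonneg z).trans_lt hz)
  obtain ⟨r, hzr, hr1⟩ := exists_between ((div_lt_one (norm_pos_iff.mpr hR)).mpr hz)
  have hratio : Tendsto (fun n => ‖z / a n‖) atTop (𝓝 (‖z‖ / ‖R‖)) := by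
    have : Tendsto (fun n => z / a n) atTop (𝓝 (z / R)) := tendsto_const_nhds.div ha hR
    simpa only [norm_div] using this.norm
  refine summable_of_ratio_norm_eventually_le hr1 ?_
  filter_upwards [hratio.eventually (ge_mem_nhds hzr)] with n hn
  rw [norm_norm, norm_norm, pow_succ, prod_range_succ, mul_div_mul_comm, norm_mul, mul_comm]
  gcongr

lemma tendsto_qBrace_succ_of_abs_lt_one {q : ℝ} (hq : |q| < 1) :
    Tendsto (fun n => qBrace q (n + 1)) atTop (𝓝 (2 / (1 - q))) := by
  have hpow := tendsto_pow_atTop_nhds_zero_of_abs_lt_one hq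
  have h1q : (1 - q) * (1 + 0) ≠ 0 := by simpa using sub_ne_zero.mpr (abs_lt.mp hq).2.ne'
  have hlim : Tendsto (fun n => 2 * (1 - q * q ^ n) / ((1 - q) * (1 + q ^ n))) atTop
      (𝓝 (2 * (1 - q * 0) / ((1 - q) * (1 + 0)))) :=
    ((tendsto_const_nhds.sub (hpow.const_mul q)).const_mul 2).div
      (tendsto_const_nhds.mul (tendsto_const_nhds.add hpow)) h1q
  simpa only [qBrace, Nat.add_sub_cancel, pow_succ', mul_zero, sub_zero, add_zero, mul_one]
    using hlim

lemma tendsto_qBrace_succ_Rq {q : ℝ} (hq : 0 < q) (hq1 : q ≠ 1) :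
    Tendsto (fun n => qBrace q (n + 1)) atTop (𝓝 (Rq q)) := by
  rcases hq1.lt_or_gt with hlt | hgt
  · rw [Rq, if_pos hlt]
    exact tendsto_qBrace_succ_of_abs_lt_one (abs_lt.mpr ⟨by linarith, hlt⟩)
  · have hinv : |q⁻¹| < 1 := by rw [abs_inv, abs_of_pos hq]; exact inv_lt_one_of_one_lt₀ hgt
    have hRq : Rq q = 2 / (1 - q⁻¹) := by
      rw [Rq, if_neg hgt.not_gt]
      field_simp
    simpa only [qBrace_inv, hRq] using tendsto_qBrace_succ_of_abs_lt_one hinv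

end Convergence

section Complex

variable {q : ℝ}

lemma pow_div_qBraceFact (hq : 0 < q) (hq1 : q ≠ 1) (z : ℂ) (n : ℕ) :
    z ^ n / (qBraceFact q n : ℂ) =
      ((∏ j ∈ range n, (1 + q ^ j) : ℝ) : ℂ) * (z / 2) ^ n / (qFact q n : ℂ) := by
  have hP : ∏ j ∈ range n, (1 + q ^ j) ≠ 0 := prod_ne_zero_iff.mpr fun j _ => by positivity
  have hF : (qFact q n : ℂ) ≠ 0 := Complex.ofReal_ne_zero.mpr (qFact_pos hq n).ne'
  rw [eq_div_of_mul_eq hP (qBraceFact_mul_prod hq.le hq1 n)]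
  push_cast
  rw [div_pow]
  field_simp

lemma sum_antidiagonal_qExp_coeff_mul (hq : 0 < q) (w : ℂ) (n : ℕ) :
    ∑ p ∈ antidiagonal n,
        w ^ p.1 / (qFact q p.1 : ℂ) * ((q : ℂ) ^ p.2.choose 2 * w ^ p.2 / (qFact q p.2 : ℂ)) =
      ((∏ j ∈ range n, (1 + q ^ j) : ℝ) : ℂ) * w ^ n / (qFact q n : ℂ) := by
  have h := qBinomialSum_eq hq n 1
  simp only [mul_one] at h
  rw [mul_div_right_comm, ← Complex.ofReal_div, ← h, qBinomialSum, Complex.ofReal_sum, sum_mul]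
  refine sum_congr rfl fun p hp => ?_
  rw [← mem_antidiagonal.mp hp, pow_add]
  push_cast
  ring

lemma norm_ofReal_mul_div_le {c P : ℝ} (hc : 0 ≤ c) (hcP : c ≤ P) (w F : ℂ) :
    ‖(c : ℂ) * w / F‖ ≤ ‖(P : ℂ) * w / F‖ := by
  simp only [norm_div, norm_mul, Complex.norm_real, Real.norm_eq_abs, abs_of_nonneg hc,
    abs_of_nonneg (hc.trans hcP)]
  gcongr

end Complex

/-- For `|z| < R_q`, the series defining `e_q(z/2)`, `E_q(z/2)` and `𝓔_q(z)` converge and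
`e_q(z/2) · E_q(z/2) = ∑_{n=0}^∞ z^n/{n}_q!`. -/
theorem improved_qExp_eq_product_of_qExps (q : ℝ) (hq : 0 < q) (hq1 : q ≠ 1) (z : ℂ)
    (hz : ‖z‖ < Rq q) :
    Summable (fun n : ℕ => (z / 2) ^ n / (qFact q n : ℂ)) ∧
    Summable (fun n : ℕ => (q : ℂ) ^ (n * (n - 1) / 2) * (z / 2) ^ n / (qFact q n : ℂ)) ∧
    Summable (fun n : ℕ => z ^ n / (qBraceFact q n : ℂ)) ∧
    (∑' n : ℕ, (z / 2) ^ n / (qFact q n : ℂ)) *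
        (∑' n : ℕ, (q : ℂ) ^ (n * (n - 1) / 2) * (z / 2) ^ n / (qFact q n : ℂ)) =
      ∑' n : ℕ, z ^ n / (qBraceFact q n : ℂ) := by
  simp only [← Nat.choose_two_right]
  have hC := pow_div_qBraceFact hq hq1 z
  have hCsum : Summable fun n => ‖z ^ n / (qBraceFact q n : ℂ)‖ := by
    have hlim := (Complex.continuous_ofReal.tendsto _).comp (tendsto_qBrace_succ_Rq hq hq1)
    simpa [qBraceFact] using summable_norm_pow_div_prod hlim
      (hz.trans_le ((le_abs_self _).trans_eq (Complex.norm_real _).symm))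
  have hAsum : Summable fun n => ‖(z / 2) ^ n / (qFact q n : ℂ)‖ :=
    hCsum.of_nonneg_of_le (fun _ => norm_nonneg _) fun n => by
      rw [hC]
      simpa only [Complex.ofReal_one, one_mul] using norm_ofReal_mul_div_le zero_le_one
        (one_le_prod_one_add_pow hq.le n) ((z / 2) ^ n) (qFact q n : ℂ)
  have hBsum : Summable fun n => ‖(q : ℂ) ^ n.choose 2 * (z / 2) ^ n / (qFact q n : ℂ)‖ :=
    hCsum.of_nonneg_of_le (fun _ => norm_nonneg _) fun n => by
      rw [hC]
      simpa only [Complex.ofReal_pow] using norm_ofReal_mul_div_le (by positivity)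
        (pow_choose_two_le_prod_one_add_pow hq.le n) ((z / 2) ^ n) (qFact q n : ℂ)
  refine ⟨hAsum.of_norm, hBsum.of_norm, hCsum.of_norm, ?_⟩
  rw [tsum_mul_tsum_eq_tsum_sum_antidiagonal_of_summable_norm hAsum hBsum]
  exact tsum_congr fun n => (sum_antidiagonal_qExp_coeff_mul hq (z / 2) n).trans (hC n).symm
end

section
/- Let q > 0, q ≠ 1, and R_q = 2/(1-q) if 0 < q < 1, R_q = 2q/(q-1) if q > 1. Define Sin_q(x) = (𝓔_q(ix) − 𝓔_q(−ix))/(2i) and Cos_q(x) = (𝓔_q(ix) + 𝓔_q(−ix))/2 for real x with |x| < R_q, where 𝓔_q(z) = ∑_{n=0}^∞ z^n/{n}_q!. Then the Pythagorean identity holds: (Cos_q(x))² + (Sin_q(x))² = 1 for all real x with |x| < R_q. -/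
/-- The improved q-exponential function `𝓔_q(z) = ∑_{n=0}^∞ z^n/{n}_q!`. -/
noncomputable def impExp (q : ℝ) (z : ℂ) : ℂ := ∑' n : ℕ, z ^ n / (qBraceFact q n : ℂ)

/-- The improved q-sine `Sin_q(x) = (𝓔_q(ix) − 𝓔_q(−ix))/(2i)`. -/
noncomputable def impSin (q : ℝ) (x : ℝ) : ℂ :=
  (impExp q (Complex.I * x) - impExp q (-(Complex.I * x))) / (2 * Complex.I)

/-- The improved q-cosine `Cos_q(x) = (𝓔_q(ix) + 𝓔_q(−ix))/2`. -/
noncomputable def impCos (q : ℝ) (x : ℝ) : ℂ :=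
  (impExp q (Complex.I * x) + impExp q (-(Complex.I * x))) / 2

/-!
Since `Cos_q(x)² + Sin_q(x)² = 𝓔_q(ix) 𝓔_q(-ix)`, it suffices to show `𝓔_q(z) 𝓔_q(-z) = 1`.
With `[n]_q = 1 + q + ⋯ + q^(n-1)` one has `{n+1}_q (1 + q^n) = 2 [n+1]_q`, so `c_n = 2ⁿ / {n}_q!`
equals `(-1; q)_n / [n]_q!` and satisfies `[k+1]_q c_{k+1} = (1 + q^k) c_k`. The coefficient of `zⁿ`
in the Cauchy product is `2⁻ⁿ D_n` with `D_n = ∑_{i+j=n} (-1)^j c_i c_j`. Splitting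
`[i+j]_q = [i]_q + q^i [j]_q` and applying the recursion to each half gives
`[m+1]_q D_{m+1} = (1 - q^m) D_m`, hence `D_n = 0` for `n ≥ 1`. Absolute convergence for `|z| < R_q`
is the ratio test, as `{n}_q → R_q`.
-/

open Finset Filter Topology

section AlternatingConvolution

variable {K : Type*} [CommRing K] (q : K)

def altConv (c : ℕ → K) (n : ℕ) : K := ∑ p ∈ antidiagonal n, (-1) ^ p.2 * c p.1 * c p.2

theorem geom_sum_add (i j : ℕ) :
    ∑ k ∈ range (i + j), q ^ k = ∑ k ∈ range i, q ^ k + q ^ i * ∑ k ∈ range j, q ^ k := by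
  simp only [sum_range_add, mul_sum, pow_add]

theorem geom_sum_mul_altConv_succ {c : ℕ → K}
    (hc : ∀ k, (∑ i ∈ range (k + 1), q ^ i) * c (k + 1) = (1 + q ^ k) * c k) (m : ℕ) :
    (∑ i ∈ range (m + 1), q ^ i) * altConv c (m + 1) = (1 - q ^ m) * altConv c m := by
  have hsplit : (∑ i ∈ range (m + 1), q ^ i) * altConv c (m + 1) =
      ∑ p ∈ antidiagonal (m + 1), (-1) ^ p.2 * ((∑ i ∈ range p.1, q ^ i) * c p.1) * c p.2 +
      ∑ p ∈ antidiagonal (m + 1),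
        (-1) ^ p.2 * q ^ p.1 * c p.1 * ((∑ i ∈ range p.2, q ^ i) * c p.2) := by
    rw [altConv, mul_sum, ← sum_add_distrib]
    refine sum_congr rfl fun p hp => ?_
    rw [← mem_antidiagonal.mp hp, geom_sum_add]
    ring
  -- shift `i` in the first sum and `j` in the second; the boundary terms carry `[0]_q = 0`
  rw [hsplit, Nat.sum_antidiagonal_succ, Nat.sum_antidiagonal_succ', altConv, mul_sum]
  simp only [range_zero, sum_empty, zero_mul, mul_zero, zero_add, hc]
  rw [← sum_add_distrib]
  refine sum_congr rfl fun p hp => ?_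
  rw [← mem_antidiagonal.mp hp]
  ring

theorem altConv_succ_eq_zero [NoZeroDivisors K] {c : ℕ → K}
    (hc : ∀ k, (∑ i ∈ range (k + 1), q ^ i) * c (k + 1) = (1 + q ^ k) * c k)
    (hq : ∀ n, ∑ i ∈ range (n + 1), q ^ i ≠ 0) (n : ℕ) : altConv c (n + 1) = 0 := by
  induction n with
  | zero => simpa using geom_sum_mul_altConv_succ q hc 0
  | succ n ih =>
    refine (mul_eq_zero.mp ?_).resolve_left (hq (n + 1))
    rw [geom_sum_mul_altConv_succ q hc, ih, mul_zero]

end AlternatingConvolution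

section QBrace

variable {q : ℝ}

theorem qBrace_succ_mul_one_add_pow (hq : 0 ≤ q) (hq1 : q ≠ 1) (k : ℕ) :
    qBrace q (k + 1) * (1 + q ^ k) = 2 * ∑ i ∈ range (k + 1), q ^ i := by
  have h1q : 1 - q ≠ 0 := sub_ne_zero.mpr hq1.symm
  have hk : 1 + q ^ k ≠ 0 := by positivity
  rw [qBrace, Nat.add_sub_cancel, ← mul_neg_geom_sum]
  field_simp

theorem tendsto_qBrace_succ (hq : 0 < q) (hq1 : q ≠ 1) :
    Tendsto (fun n => qBrace q (n + 1)) atTop (𝓝 (Rq q)) := by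
  have h1q : 1 - q ≠ 0 := sub_ne_zero.mpr hq1.symm
  rcases hq1.lt_or_gt with hlt | hgt
  · have h0 := tendsto_pow_atTop_nhds_zero_of_lt_one hq.le hlt
    have hlim := (((h0.const_mul q).const_sub 1).const_mul 2).div
      ((h0.const_add 1).const_mul (1 - q)) (by simpa using h1q)
    convert hlim using 2 with n
    · rw [Pi.div_apply, qBrace, Nat.add_sub_cancel, pow_succ']
    · rw [Rq, if_pos hlt]; simp
  · have h0 := tendsto_pow_atTop_nhds_zero_of_lt_one (inv_nonneg.mpr hq.le)
      (inv_lt_one_of_one_lt₀ hgt)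
    have hlim := ((h0.sub_const q).const_mul 2).div
      ((h0.add_const 1).const_mul (1 - q)) (by simpa using h1q)
    convert hlim using 2 with n
    · rw [Pi.div_apply, qBrace, Nat.add_sub_cancel, inv_pow]
      field_simp
      ring
    · rw [Rq, if_neg hgt.not_gt]
      field_simp
      ring

theorem qBrace_succ_pos (hq : 0 < q) (hq1 : q ≠ 1) (k : ℕ) : 0 < qBrace q (k + 1) := by
  rw [eq_div_of_mul_eq (by positivity) (qBrace_succ_mul_one_add_pow hq.le hq1 k)]
  have := geom_sum_pos hq.le k.succ_ne_zero
  positivity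

theorem qBraceFact_succ (n : ℕ) : qBraceFact q (n + 1) = qBraceFact q n * qBrace q (n + 1) :=
  prod_range_succ _ _

theorem qBraceFact_pos (hq : 0 < q) (hq1 : q ≠ 1) (n : ℕ) : 0 < qBraceFact q n :=
  prod_pos fun k _ => qBrace_succ_pos hq hq1 k

theorem geom_sum_mul_two_pow_div_qBraceFact_succ (hq : 0 < q) (hq1 : q ≠ 1) (k : ℕ) :
    (∑ i ∈ range (k + 1), q ^ i) * (2 ^ (k + 1) / qBraceFact q (k + 1)) =
      (1 + q ^ k) * (2 ^ k / qBraceFact q k) := by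
  have hF := (qBraceFact_pos hq hq1 k).ne'
  have hB := (qBrace_succ_pos hq hq1 k).ne'
  rw [qBraceFact_succ]
  field_simp
  linear_combination -(2 ^ k : ℝ) * qBrace_succ_mul_one_add_pow hq.le hq1 k

theorem altConv_two_pow_div_qBraceFact (hq : 0 < q) (hq1 : q ≠ 1) (n : ℕ) :
    altConv (fun k => 2 ^ k / qBraceFact q k) (n + 1) = 0 :=
  altConv_succ_eq_zero q (geom_sum_mul_two_pow_div_qBraceFact_succ hq hq1)
    (fun n => (geom_sum_pos hq.le n.succ_ne_zero).ne') n

theorem Rq_pos (hq : 0 < q) (hq1 : q ≠ 1) : 0 < Rq q := by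
  unfold Rq
  split_ifs with h
  · exact div_pos two_pos (sub_pos.mpr h)
  · exact div_pos (by positivity) (sub_pos.mpr (lt_of_le_of_ne (not_lt.mp h) hq1.symm))

theorem summable_pow_div_qBraceFact (hq : 0 < q) (hq1 : q ≠ 1) {t : ℝ} (ht : 0 < t)
    (htR : t < Rq q) : Summable fun n => t ^ n / qBraceFact q n := by
  refine summable_of_ratio_test_tendsto_lt_one ((div_lt_one (Rq_pos hq hq1)).mpr htR)
    (Eventually.of_forall fun n => (div_pos (pow_pos ht n) (qBraceFact_pos hq hq1 n)).ne') ?_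
  refine (tendsto_const_nhds.div (tendsto_qBrace_succ hq hq1) (Rq_pos hq hq1).ne').congr
    fun n => ?_
  have hF := qBraceFact_pos hq hq1 n
  have hB := qBrace_succ_pos hq hq1 n
  rw [Pi.div_apply, qBraceFact_succ, Real.norm_of_nonneg (by positivity),
    Real.norm_of_nonneg (by positivity)]
  field_simp
  ring

theorem summable_norm_pow_div_qBraceFact (hq : 0 < q) (hq1 : q ≠ 1) {z : ℂ} (hz : ‖z‖ < Rq q) :
    Summable fun n => ‖z ^ n / (qBraceFact q n : ℂ)‖ := by
  obtain ⟨t, hzt, htR⟩ := exists_between hz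
  refine (summable_pow_div_qBraceFact hq hq1 ((norm_nonneg z).trans_lt hzt) htR).of_nonneg_of_le
    (fun n => norm_nonneg _) fun n => ?_
  rw [norm_div, norm_pow, Complex.norm_real, Real.norm_of_nonneg (qBraceFact_pos hq hq1 n).le]
  gcongr
  exact (qBraceFact_pos hq hq1 n).le

end QBrace

theorem impExp_mul_impExp_neg {q : ℝ} (hq : 0 < q) (hq1 : q ≠ 1) {z : ℂ} (hz : ‖z‖ < Rq q) :
    impExp q z * impExp q (-z) = 1 := by
  rw [impExp, impExp, tsum_mul_tsum_eq_tsum_sum_antidiagonal_of_summable_norm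
    (summable_norm_pow_div_qBraceFact hq hq1 hz)
    (summable_norm_pow_div_qBraceFact hq hq1 (by rwa [norm_neg])), tsum_eq_single 0]
  · simp [qBraceFact]
  rintro _ hn
  obtain ⟨n, rfl⟩ := Nat.exists_eq_succ_of_ne_zero hn
  have hcoeff : ∑ p ∈ antidiagonal (n + 1),
      z ^ p.1 / (qBraceFact q p.1 : ℂ) * ((-z) ^ p.2 / (qBraceFact q p.2 : ℂ)) =
        z ^ (n + 1) / 2 ^ (n + 1) * (altConv (fun k => 2 ^ k / qBraceFact q k) (n + 1) : ℝ) := by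
    rw [altConv]
    push_cast
    rw [mul_sum]
    refine sum_congr rfl fun p hp => ?_
    have h1 := Complex.ofReal_ne_zero.mpr (qBraceFact_pos hq hq1 p.1).ne'
    have h2 := Complex.ofReal_ne_zero.mpr (qBraceFact_pos hq hq1 p.2).ne'
    rw [← mem_antidiagonal.mp hp, neg_pow, pow_add, pow_add]
    field_simp
  rw [hcoeff, altConv_two_pow_div_qBraceFact hq hq1, Complex.ofReal_zero, mul_zero]

/-- Pythagorean identity: `Cos_q(x)² + Sin_q(x)² = 1` for real `x` with `|x| < R_q`. -/
theorem impCos_sq_add_impSin_sq (q : ℝ) (hq : 0 < q) (hq1 : q ≠ 1) (x : ℝ)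
    (hx : |x| < Rq q) : (impCos q x) ^ 2 + (impSin q x) ^ 2 = 1 := by
  have hix : ‖Complex.I * x‖ < Rq q := by
    rwa [norm_mul, Complex.norm_I, one_mul, Complex.norm_real, Real.norm_eq_abs]
  have hprod := impExp_mul_impExp_neg hq hq1 hix
  rw [impCos, impSin]
  field_simp
  rw [Complex.I_sq]
  linear_combination -4 * hprod
end
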